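/- Fix integers 0 = s_1 < s_2 < ... < s_k, set S = {s_1,...,s_k} and s̄ = s_k. Let n_1, n_2 ≥ 2s̄, let T_1 be a legal cover of L_{n_1} and T_2 a legal cover of L_{n_2} with C(T_1) = C(T_2). Let S' ⊆ S, and for m ∈ {n_1, n_2} set E_m(S') = { (m−s, m) : s ∈ S' } ⊆ New(m). Then T_1 ∪ E_{n_1}(S') is a legal cover of L_{n_1+1} if and only if T_2 ∪ E_{n_2}(S') is a legal cover of L_{n_2+1}, and in that case C(T_1 ∪ E_{n_1}(S')) = C(T_2 ∪ E_{n_2}(S')). -/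

import Mathlib

/-- The number of edges of `T` ending at vertex `v`. -/
def indeg (T : Finset (ℕ × ℕ)) (v : ℕ) : ℕ := (T.filter fun e => e.2 = v).card

/-- The number of edges of `T` starting at vertex `v`. -/
def outdeg (T : Finset (ℕ × ℕ)) (v : ℕ) : ℕ := (T.filter fun e => e.1 = v).card

/-- Edge set of the directed circulant graph `C_n` with jump set `S`:
edges `(i,j)` with `i, j ∈ {0,…,n−1}` and `(j − i) mod n ∈ S`. -/
def ECirc (S : Finset ℕ) (n : ℕ) : Finset (ℕ × ℕ) :=
  (Finset.range n ×ˢ Finset.range n).filter fun e => (e.2 + n - e.1) % n ∈ S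

/-- Edge set of the lattice graph `L_n` with jump set `S`:
edges `(i,j)` with `i, j ∈ {0,…,n−1}` and `j − i ∈ S`. -/
def ELat (S : Finset ℕ) (n : ℕ) : Finset (ℕ × ℕ) :=
  (Finset.range n ×ˢ Finset.range n).filter fun e => e.1 ≤ e.2 ∧ e.2 - e.1 ∈ S

/-- `Hook(n) = E_C(n) \ E_L(n)`. -/
def Hook (S : Finset ℕ) (n : ℕ) : Finset (ℕ × ℕ) := ECirc S n \ ELat S n

/-- `New(n) = E_L(n+1) \ E_L(n)`. -/
def NewE (S : Finset ℕ) (n : ℕ) : Finset (ℕ × ℕ) := ELat S (n + 1) \ ELat S n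

/-- `T` is a cycle cover of `C_n`: `T ⊆ E_C(n)` and every vertex has in- and out-degree 1. -/
def CycleCover (S : Finset ℕ) (n : ℕ) (T : Finset (ℕ × ℕ)) : Prop :=
  T ⊆ ECirc S n ∧ ∀ v < n, indeg T v = 1 ∧ outdeg T v = 1

/-- `T` is a legal cover of `L_n` (with `L(n) = {0,…,s̄−1}`, `R(n) = {n−s̄,…,n−1}`):
all in/out-degrees are at most 1, vertices outside `L(n)` have in-degree 1, and
vertices outside `R(n)` have out-degree 1. -/
def LegalCover (S : Finset ℕ) (sbar n : ℕ) (T : Finset (ℕ × ℕ)) : Prop :=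
  T ⊆ ELat S n ∧ (∀ v < n, indeg T v ≤ 1 ∧ outdeg T v ≤ 1) ∧
    (∀ v < n, sbar ≤ v → indeg T v = 1) ∧
    (∀ v < n, v < n - sbar → outdeg T v = 1)

/-- The classification `C(T) = (L^T, R^T)` of a legal cover of `L_n`, as a pair of binary
`s̄`-tuples: `L^T(i)` records whether `indeg_T(i) = 1` and `R^T(i)` whether
`outdeg_T(n−1−i) = 1`. -/
def classif (sbar n : ℕ) (T : Finset (ℕ × ℕ)) :
    (Fin sbar → Bool) × (Fin sbar → Bool) :=
  (fun i => decide (indeg T i.val = 1), fun i => decide (outdeg T (n - 1 - i.val) = 1))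


/-!
Adding the edges `E_n(S')` to a legal cover `T` of `L_n` raises the in-degree of the new
vertex `n` to `#S'` and the out-degree of `n - s` by one for each `s ∈ S'`, and changes nothing
else. Since every `s ∈ S'` is at most `s̄ ≤ n`, whether `T ∪ E_n(S')` is legal, and what its
classification is, therefore depends only on `#S'`, on `L^T`, and on the out-degrees of `T` at
the vertices `n - s` with `s ≤ s̄`. These out-degrees are `0` for `s = 0` and are recorded by
`R^T(s - 1)` for `s ≥ 1`, so they agree for two legal covers with the same classification.
-/

open Finset

/-- The paper's `E_n(S')`. -/
abbrev edgesInto (n : ℕ) (S' : Finset ℕ) : Finset (ℕ × ℕ) :=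
  S'.image fun s => (n - s, n)

section Degrees

variable {S S' : Finset ℕ} {n : ℕ} {T U : Finset (ℕ × ℕ)}

lemma mem_ELat {e : ℕ × ℕ} :
    e ∈ ELat S n ↔ e.1 < n ∧ e.2 < n ∧ e.1 ≤ e.2 ∧ e.2 - e.1 ∈ S := by
  simp [ELat, and_assoc]

lemma ELat_subset_ELat {m : ℕ} (h : n ≤ m) : ELat S n ⊆ ELat S m := fun e he => by
  obtain ⟨h1, h2, h3, h4⟩ := mem_ELat.1 he
  exact mem_ELat.2 ⟨by omega, by omega, h3, h4⟩

lemma edgesInto_subset_ELat (hS'n : ∀ s ∈ S', s ≤ n) (hS' : S' ⊆ S) :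
    edgesInto n S' ⊆ ELat S (n + 1) := by
  intro e he
  obtain ⟨s, hs, rfl⟩ := mem_image.1 he
  have := hS'n s hs
  exact mem_ELat.2 ⟨by omega, by omega, by omega, by simpa [Nat.sub_sub_self this] using hS' hs⟩

lemma disjoint_edgesInto (hT : T ⊆ ELat S n) : Disjoint T (edgesInto n S') := by
  rw [disjoint_right]
  intro e he heT
  obtain ⟨s, -, rfl⟩ := mem_image.1 he
  exact lt_irrefl n (mem_ELat.1 (hT heT)).2.1

lemma indeg_union (h : Disjoint T U) (v : ℕ) : indeg (T ∪ U) v = indeg T v + indeg U v := by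
  rw [indeg, indeg, indeg, filter_union, card_union_of_disjoint (disjoint_filter_filter h)]

lemma outdeg_union (h : Disjoint T U) (v : ℕ) :
    outdeg (T ∪ U) v = outdeg T v + outdeg U v := by
  rw [outdeg, outdeg, outdeg, filter_union, card_union_of_disjoint (disjoint_filter_filter h)]

lemma indeg_eq_zero_of_subset_ELat (hT : T ⊆ ELat S n) {v : ℕ} (hv : n ≤ v) :
    indeg T v = 0 := by
  rw [indeg, card_eq_zero, filter_eq_empty_iff]
  intro e he hev
  have := (mem_ELat.1 (hT he)).2.1
  omega

lemma outdeg_eq_zero_of_subset_ELat (hT : T ⊆ ELat S n) {v : ℕ} (hv : n ≤ v) :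
    outdeg T v = 0 := by
  rw [outdeg, card_eq_zero, filter_eq_empty_iff]
  intro e he hev
  have := (mem_ELat.1 (hT he)).1
  omega

lemma injOn_edgesInto (hS'n : ∀ s ∈ S', s ≤ n) :
    Set.InjOn (fun s => (n - s, n)) (S' : Set ℕ) := fun a ha b hb hab => by
  have := hS'n a ha
  have := hS'n b hb
  simp only [Prod.mk.injEq] at hab
  omega

lemma indeg_edgesInto (hS'n : ∀ s ∈ S', s ≤ n) (v : ℕ) :
    indeg (edgesInto n S') v = if v = n then #S' else 0 := by
  rw [indeg, filter_image,
    card_image_of_injOn ((injOn_edgesInto hS'n).mono (coe_subset.2 (filter_subset _ _)))]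
  split_ifs with h <;> simp [h, Ne.symm]

lemma outdeg_edgesInto_sub (hS'n : ∀ s ∈ S', s ≤ n) {s : ℕ} (hs : s ≤ n) :
    outdeg (edgesInto n S') (n - s) = if s ∈ S' then 1 else 0 := by
  rw [outdeg, filter_image,
    card_image_of_injOn ((injOn_edgesInto hS'n).mono (coe_subset.2 (filter_subset _ _))),
    filter_congr fun t ht => show n - t = n - s ↔ t = s by have := hS'n t ht; omega,
    filter_eq']
  split_ifs <;> simp

lemma outdeg_edgesInto_eq_zero {v : ℕ} (hv : ∀ s ∈ S', n - s ≠ v) :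
    outdeg (edgesInto n S') v = 0 := by
  rw [outdeg, card_eq_zero, filter_eq_empty_iff]
  intro e he
  obtain ⟨s, hs, rfl⟩ := mem_image.1 he
  exact hv s hs

lemma indeg_union_edgesInto (hT : T ⊆ ELat S n) (hS'n : ∀ s ∈ S', s ≤ n) (v : ℕ) :
    indeg (T ∪ edgesInto n S') v = indeg T v + if v = n then #S' else 0 := by
  rw [indeg_union (disjoint_edgesInto hT), indeg_edgesInto hS'n]

lemma outdeg_union_edgesInto_sub (hT : T ⊆ ELat S n) (hS'n : ∀ s ∈ S', s ≤ n) {s : ℕ}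
    (hs : s ≤ n) :
    outdeg (T ∪ edgesInto n S') (n - s) = outdeg T (n - s) + if s ∈ S' then 1 else 0 := by
  rw [outdeg_union (disjoint_edgesInto hT), outdeg_edgesInto_sub hS'n hs]

lemma outdeg_union_edgesInto_of_forall_ne (hT : T ⊆ ELat S n) {v : ℕ}
    (hv : ∀ s ∈ S', n - s ≠ v) :
    outdeg (T ∪ edgesInto n S') v = outdeg T v := by
  rw [outdeg_union (disjoint_edgesInto hT), outdeg_edgesInto_eq_zero hv, add_zero]

end Degrees

section LegalCover

variable {S S' : Finset ℕ} {sbar n : ℕ} {T : Finset (ℕ × ℕ)}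

lemma LegalCover.outdeg_sub_eq_of_classif_eq {n₁ n₂ s : ℕ} {T₁ T₂ : Finset (ℕ × ℕ)}
    (hT₁ : LegalCover S sbar n₁ T₁) (hT₂ : LegalCover S sbar n₂ T₂)
    (hC : classif sbar n₁ T₁ = classif sbar n₂ T₂) (hs : s ≤ sbar) (hn₁ : sbar ≤ n₁)
    (hn₂ : sbar ≤ n₂) :
    outdeg T₁ (n₁ - s) = outdeg T₂ (n₂ - s) := by
  rcases Nat.eq_zero_or_pos s with rfl | hpos
  · rw [Nat.sub_zero, Nat.sub_zero, outdeg_eq_zero_of_subset_ELat hT₁.1 le_rfl,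
      outdeg_eq_zero_of_subset_ELat hT₂.1 le_rfl]
  · have hR := congrFun (congrArg Prod.snd hC) ⟨s - 1, by omega⟩
    simp only [classif, decide_eq_decide] at hR
    rw [show n₁ - 1 - (s - 1) = n₁ - s by omega, show n₂ - 1 - (s - 1) = n₂ - s by omega] at hR
    have h₁ := (hT₁.2.1 (n₁ - s) (by omega)).2
    have h₂ := (hT₂.2.1 (n₂ - s) (by omega)).2
    omega

lemma legalCover_union_edgesInto_iff (hT : LegalCover S sbar n T) (hS' : S' ⊆ S)
    (hS'bar : ∀ s ∈ S', s ≤ sbar) (hn : sbar ≤ n) :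
    LegalCover S sbar (n + 1) (T ∪ edgesInto n S') ↔
      #S' = 1 ∧ (∀ s ≤ sbar, outdeg T (n - s) + (if s ∈ S' then 1 else 0) ≤ 1) ∧
        outdeg T (n - sbar) + (if sbar ∈ S' then 1 else 0) = 1 := by
  have hS'n : ∀ s ∈ S', s ≤ n := fun s hs => (hS'bar s hs).trans hn
  have hin := indeg_union_edgesInto hT.1 hS'n
  have hout := fun s (hs : s ≤ n) => outdeg_union_edgesInto_sub hT.1 hS'n hs
  have hfar : ∀ v < n - sbar, outdeg (T ∪ edgesInto n S') v = outdeg T v := fun v hv =>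
    outdeg_union_edgesInto_of_forall_ne hT.1 fun s hs => by have := hS'bar s hs; omega
  have hinT : indeg T n = 0 := indeg_eq_zero_of_subset_ELat hT.1 le_rfl
  obtain ⟨hsub, hle, hin₁, hout₁⟩ := hT
  constructor
  · rintro ⟨-, hle', hin₁', hout₁'⟩
    refine ⟨?_, fun s hs => ?_, ?_⟩
    · simpa [hin, hinT] using hin₁' n (by omega) hn
    · rw [← hout s (by omega)]
      exact (hle' _ (by omega)).2
    · rw [← hout sbar hn]
      exact hout₁' _ (by omega) (by omega)
  · rintro ⟨hcard, hbdry, hcorner⟩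
    refine ⟨union_subset (hsub.trans (ELat_subset_ELat n.le_succ))
      (edgesInto_subset_ELat hS'n hS'), fun v hv => ⟨?_, ?_⟩, fun v hv hsv => ?_,
      fun v hv hvs => ?_⟩
    · rw [hin]
      split_ifs with h
      · rw [h, hinT, hcard]
      · have := (hle v (by omega)).1
        omega
    · rcases lt_or_ge v (n - sbar) with h | h
      · rw [hfar v h]
        exact (hle v (by omega)).2
      · obtain ⟨s, hs, rfl⟩ : ∃ s ≤ sbar, v = n - s := ⟨n - v, by omega, by omega⟩
        rw [hout s (by omega)]
        exact hbdry s hs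
    · rw [hin]
      split_ifs with h
      · rw [h, hinT, hcard]
      · rw [hin₁ v (by omega) hsv]
    · rcases show v < n - sbar ∨ v = n - sbar by omega with h | rfl
      · rw [hfar v h, hout₁ v (by omega) h]
      · rw [hout sbar hn]
        exact hcorner

lemma classif_union_edgesInto (hT : T ⊆ ELat S n) (hS' : ∀ s ∈ S', s ≤ sbar) (hn : sbar ≤ n) :
    classif sbar (n + 1) (T ∪ edgesInto n S') =
      ((classif sbar n T).1,
        fun i : Fin sbar => decide (outdeg T (n - i) + (if (i : ℕ) ∈ S' then 1 else 0) = 1)) := by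
  have hS'n : ∀ s ∈ S', s ≤ n := fun s hs => (hS' s hs).trans hn
  refine Prod.ext (funext fun i => ?_) (funext fun i => ?_)
  · simp only [classif]
    rw [indeg_union_edgesInto hT hS'n, if_neg (by omega), add_zero]
  · simp only [classif]
    rw [show n + 1 - 1 - i = n - i by omega, outdeg_union_edgesInto_sub hT hS'n (by omega)]

end LegalCover

/-- Extending a legal cover by New-edges depends only on the classification.
Let `T_1, T_2` be legal covers of `L_{n_1}, L_{n_2}` (with `n_1, n_2 ≥ 2s̄`) having the
same classification, let `S' ⊆ S`, and set `E_m(S') = {(m−s, m) : s ∈ S'}`.  Then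
`T_1 ∪ E_{n_1}(S')` is a legal cover of `L_{n_1+1}` iff `T_2 ∪ E_{n_2}(S')` is a legal
cover of `L_{n_2+1}`, and in that case the two extensions have equal classifications. -/
theorem legal_extension_depends_only_on_classif (S : Finset ℕ) (h0 : 0 ∈ S)
    (sbar : ℕ) (hsbar : sbar = S.max' ⟨0, h0⟩) (n1 n2 : ℕ)
    (hn1 : 2 * sbar ≤ n1) (hn2 : 2 * sbar ≤ n2) (T1 T2 : Finset (ℕ × ℕ))
    (hT1 : LegalCover S sbar n1 T1) (hT2 : LegalCover S sbar n2 T2)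
    (hC : classif sbar n1 T1 = classif sbar n2 T2)
    (S' : Finset ℕ) (hS' : S' ⊆ S) :
    (LegalCover S sbar (n1 + 1) (T1 ∪ S'.image fun s => (n1 - s, n1)) ↔
      LegalCover S sbar (n2 + 1) (T2 ∪ S'.image fun s => (n2 - s, n2))) ∧
    (LegalCover S sbar (n1 + 1) (T1 ∪ S'.image fun s => (n1 - s, n1)) →
      classif sbar (n1 + 1) (T1 ∪ S'.image fun s => (n1 - s, n1)) =
        classif sbar (n2 + 1) (T2 ∪ S'.image fun s => (n2 - s, n2))) := by
  have hS'bar : ∀ s ∈ S', s ≤ sbar := fun s hs => hsbar ▸ S.le_max' s (hS' hs)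
  have hout : ∀ s ≤ sbar, outdeg T1 (n1 - s) = outdeg T2 (n2 - s) := fun s hs =>
    hT1.outdeg_sub_eq_of_classif_eq hT2 hC hs (by omega) (by omega)
  refine ⟨?_, fun _ => ?_⟩
  · rw [legalCover_union_edgesInto_iff hT1 hS' hS'bar (by omega),
      legalCover_union_edgesInto_iff hT2 hS' hS'bar (by omega), hout sbar le_rfl]
    exact and_congr_right' (and_congr_left' (forall₂_congr fun s hs => by rw [hout s hs]))
  · rw [classif_union_edgesInto hT1.1 hS'bar (by omega),
      classif_union_edgesInto hT2.1 hS'bar (by omega), hC]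
    congr 2 with i
    rw [hout i i.isLt.le]
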